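/- Suppose the latent sub-treatment types S(d) and S(d-1) satisfy: (a) no sorting, P(S(d)=s | D ∈ {d,d-1}) = P(S(d)=s | D=d) = P(S=s | D=d) and analogously at d-1, and (b) no incongruent latent types, P(S(d)=s_d, S(d-1)=s_{d-1} | D ∈ {d,d-1}) = 0 for every incongruent pair. Then the weights w(s_d, s_{d-1}) := P(S(d)=s_d, S(d-1)=s_{d-1} | D ∈ {d,d-1}) satisfy the coupling constraints (∑_{s_d} w = P(S=s_{d-1}|D=d-1), ∑_{s_{d-1}} w = P(S=s_d|D=d)) and place zero weight on all incongruent pairs, so that E[Y|D=d] − E[Y|D=d-1] = ∑_{congruent pairs} w(s_d, s_{d-1})·(E[Y|S=s_d] − E[Y|S=s_{d-1}]). -/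

import Mathlib

open Finset

/- Probability of an event, conditional probability `P(A|B)`, and conditional
expectation `E[Y|A]` under a mass function `p` on a finite sample space. -/

open Classical in
noncomputable def Pr {Ω : Type*} [Fintype Ω] (p : Ω → ℝ) (A : Ω → Prop) : ℝ :=
  ∑ ω, if A ω then p ω else 0

noncomputable def cPr {Ω : Type*} [Fintype Ω] (p : Ω → ℝ) (A B : Ω → Prop) : ℝ :=
  Pr p (fun ω => A ω ∧ B ω) / Pr p B

open Classical in
noncomputable def cexp {Ω : Type*} [Fintype Ω] (p : Ω → ℝ) (Y : Ω → ℝ) (A : Ω → Prop) : ℝ :=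
  (∑ ω, if A ω then p ω * Y ω else 0) / Pr p A

/-! Consistency identifies the event `{D = d}` with `S` taking a value of `S(d)`, so by the law of
total expectation `E[Y | D = d] = ∑ P(S = s | D = d) · E[Y | S = s]`, and likewise at `d - 1`.
No sorting says that these observed laws are the two marginals of the latent joint law `w` of
`(S(d), S(d-1))` given `D ∈ {d, d-1}`; writing both sums against `w` turns the difference into
`∑ w(s, s') · (E[Y | S = s] - E[Y | S = s'])`, and no incongruent types removes the incongruent
pairs. -/

section

variable {Ω : Type*} [Fintype Ω]

theorem Pr_congr (g : Ω → ℝ) {A B : Ω → Prop} (h : ∀ ω, A ω ↔ B ω) : Pr g A = Pr g B := by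
  rw [funext fun ω => propext (h ω)]

theorem cexp_eq_Pr_div (p Y : Ω → ℝ) (A : Ω → Prop) :
    cexp p Y A = Pr (fun ω => p ω * Y ω) A / Pr p A := rfl

theorem sum_Pr_fiber {α : Type*} (g : Ω → ℝ) (f : Ω → α) (A : Ω → Prop) {F : Finset α}
    (hF : ∀ ω, A ω → f ω ∈ F) :
    ∑ s ∈ F, Pr g (fun ω => f ω = s ∧ A ω) = Pr g A := by
  classical
  unfold Pr
  rw [sum_comm]
  refine sum_congr rfl fun ω _ => ?_
  by_cases hA : A ω
  · simp [hA, hF ω hA]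
  · simp [hA]

theorem Pr_mul_eq_zero_of_Pr_eq_zero {p : Ω → ℝ} (hp0 : ∀ ω, 0 ≤ p ω) (Y : Ω → ℝ)
    {A : Ω → Prop} (h : Pr p A = 0) : Pr (fun ω => p ω * Y ω) A = 0 := by
  classical
  unfold Pr at h ⊢
  have hnull := (sum_eq_zero_iff_of_nonneg fun ω _ => by split_ifs <;> simp [hp0 ω]).mp h
  refine sum_eq_zero fun ω hω => ?_
  split_ifs with hA
  · have hpω := hnull ω hω
    rw [if_pos hA] at hpω
    simp [hpω]
  · rfl

theorem sum_cPr_fiber {α : Type*} (p : Ω → ℝ) (f : Ω → α) (A B : Ω → Prop) {F : Finset α}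
    (hF : ∀ ω, A ω → B ω → f ω ∈ F) :
    ∑ s ∈ F, cPr p (fun ω => f ω = s ∧ A ω) B = cPr p A B := by
  unfold cPr
  rw [← sum_div, ← sum_Pr_fiber p f (fun ω => A ω ∧ B ω) fun ω h => hF ω h.1 h.2]
  simp only [and_assoc]

theorem cexp_eq_sum_cPr_mul_cexp {α : Type*} {p : Ω → ℝ} (hp0 : ∀ ω, 0 ≤ p ω) (Y : Ω → ℝ)
    (f : Ω → α) {E : Ω → Prop} {F : Finset α} (hE : ∀ ω, E ω ↔ f ω ∈ F) :
    cexp p Y E = ∑ s ∈ F, cPr p (fun ω => f ω = s) E * cexp p Y (fun ω => f ω = s) := by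
  have hterm : ∀ s ∈ F, cPr p (fun ω => f ω = s) E * cexp p Y (fun ω => f ω = s)
      = Pr (fun ω => p ω * Y ω) (fun ω => f ω = s ∧ E ω) / Pr p E := by
    intro s hs
    have hfiber : ∀ ω, f ω = s ∧ E ω ↔ f ω = s :=
      fun ω => ⟨And.left, fun h => ⟨h, (hE ω).2 (h ▸ hs)⟩⟩
    rw [cPr, cexp_eq_Pr_div, Pr_congr _ hfiber, Pr_congr _ hfiber]
    by_cases hnull : Pr p (fun ω => f ω = s) = 0
    -- a null cell reads `0 / 0 = 0` on both sides; this is where `p ≥ 0` is needed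
    · simp [hnull, Pr_mul_eq_zero_of_Pr_eq_zero hp0 Y hnull]
    · field_simp
  rw [sum_congr rfl hterm, ← sum_div, sum_Pr_fiber _ f E fun ω => (hE ω).1, cexp_eq_Pr_div]

theorem sum_mul_sub_sum_mul_eq_of_marginals {ι κ R : Type*} [CommRing R] {F : Finset ι}
    {G : Finset κ} {w : ι → κ → R} {μ : ι → R} {ν : κ → R}
    (hμ : ∀ a ∈ F, ∑ b ∈ G, w a b = μ a) (hν : ∀ b ∈ G, ∑ a ∈ F, w a b = ν b) (x : ι → R)
    (y : κ → R) :
    ∑ a ∈ F, μ a * x a - ∑ b ∈ G, ν b * y b = ∑ a ∈ F, ∑ b ∈ G, w a b * (x a - y b) := by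
  have hx : ∑ a ∈ F, μ a * x a = ∑ a ∈ F, ∑ b ∈ G, w a b * x a :=
    sum_congr rfl fun a ha => by rw [← sum_mul, hμ a ha]
  have hy : ∑ b ∈ G, ν b * y b = ∑ a ∈ F, ∑ b ∈ G, w a b * y b := by
    rw [sum_comm]
    exact sum_congr rfl fun b hb => by rw [← sum_mul, hν b hb]
  simp only [hx, hy, mul_sub, sum_sub_distrib]

theorem eq_iff_mem_filter_image {K : ℕ} {S L : Ω → Fin K → ℕ} {D : Ω → ℕ}
    (hD : ∀ ω, D ω = ∑ i, S ω i) {n : ℕ} (hcons : ∀ ω, D ω = n → S ω = L ω) (ω : Ω) :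
    D ω = n ↔ S ω ∈ (univ.image L).filter (fun s => ∑ i, s i = n) := by
  rw [mem_filter, ← hD]
  exact ⟨fun h => ⟨hcons ω h ▸ mem_image_of_mem L (mem_univ ω), h⟩, And.right⟩

end

open Classical in
theorem no_incongruent_latent_types_decomposition_general
    {Ω : Type*} [Fintype Ω] (K : ℕ)
    (p : Ω → ℝ) (hp0 : ∀ ω, 0 ≤ p ω)
    (Y : Ω → ℝ)
    (S Sd Sd1 : Ω → Fin K → ℕ) (D : Ω → ℕ) (hD : ∀ ω, D ω = ∑ i, S ω i)
    (d : ℕ)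
    -- latent sub-treatments aggregate to their level
    (hSd : ∀ ω, ∑ i, Sd ω i = d) (hSd1 : ∀ ω, ∑ i, Sd1 ω i = d - 1)
    -- consistency: the observed sub-treatment equals the latent one, S = S(D)
    (hconsd : ∀ ω, D ω = d → S ω = Sd ω) (hconsd1 : ∀ ω, D ω = d - 1 → S ω = Sd1 ω)
    -- (a) no sorting of latent types on D
    (hNSd : ∀ s : Fin K → ℕ,
      cPr p (fun ω => Sd ω = s) (fun ω => D ω = d ∨ D ω = d - 1)
        = cPr p (fun ω => Sd ω = s) (fun ω => D ω = d) ∧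
      cPr p (fun ω => Sd ω = s) (fun ω => D ω = d)
        = cPr p (fun ω => S ω = s) (fun ω => D ω = d))
    (hNSd1 : ∀ s' : Fin K → ℕ,
      cPr p (fun ω => Sd1 ω = s') (fun ω => D ω = d ∨ D ω = d - 1)
        = cPr p (fun ω => Sd1 ω = s') (fun ω => D ω = d - 1) ∧
      cPr p (fun ω => Sd1 ω = s') (fun ω => D ω = d - 1)
        = cPr p (fun ω => S ω = s') (fun ω => D ω = d - 1))
    -- (b) no incongruent latent types
    (hNI : ∀ s s' : Fin K → ℕ, (∑ i, s i = d) → (∑ i, s' i = d - 1) →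
      (∀ j : Fin K, s ≠ s' + Pi.single j 1) →
      cPr p (fun ω => Sd ω = s ∧ Sd1 ω = s') (fun ω => D ω = d ∨ D ω = d - 1) = 0) :
    -- the latent joint distribution is a valid coupling …
    (∀ s' : Fin K → ℕ, (∑ i, s' i = d - 1) →
      ∑ s ∈ (univ.image Sd).filter (fun s => ∑ i, s i = d),
          cPr p (fun ω => Sd ω = s ∧ Sd1 ω = s') (fun ω => D ω = d ∨ D ω = d - 1)
        = cPr p (fun ω => S ω = s') (fun ω => D ω = d - 1)) ∧
    (∀ s : Fin K → ℕ, (∑ i, s i = d) →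
      ∑ s' ∈ (univ.image Sd1).filter (fun s' => ∑ i, s' i = d - 1),
          cPr p (fun ω => Sd ω = s ∧ Sd1 ω = s') (fun ω => D ω = d ∨ D ω = d - 1)
        = cPr p (fun ω => S ω = s) (fun ω => D ω = d)) ∧
    -- … that rationalizes the aggregate marginal effect with congruent pairs only
    (cexp p Y (fun ω => D ω = d) - cexp p Y (fun ω => D ω = d - 1)
      = ∑ s ∈ (univ.image Sd).filter (fun s => ∑ i, s i = d),
          ∑ s' ∈ (univ.image Sd1).filter (fun s' => ∑ i, s' i = d - 1),
            if ∃ j : Fin K, s = s' + Pi.single j 1 then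
              cPr p (fun ω => Sd ω = s ∧ Sd1 ω = s') (fun ω => D ω = d ∨ D ω = d - 1) *
                (cexp p Y (fun ω => S ω = s) - cexp p Y (fun ω => S ω = s'))
            else 0) := by
  set B : Ω → Prop := fun ω => D ω = d ∨ D ω = d - 1
  set Fd := (univ.image Sd).filter (fun s => ∑ i, s i = d)
  set Fd1 := (univ.image Sd1).filter (fun s' => ∑ i, s' i = d - 1)
  have hmemFd : ∀ ω, Sd ω ∈ Fd :=
    fun ω => mem_filter.2 ⟨mem_image_of_mem Sd (mem_univ ω), hSd ω⟩
  have hmemFd1 : ∀ ω, Sd1 ω ∈ Fd1 :=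
    fun ω => mem_filter.2 ⟨mem_image_of_mem Sd1 (mem_univ ω), hSd1 ω⟩
  have hcol : ∀ s', ∑ s ∈ Fd, cPr p (fun ω => Sd ω = s ∧ Sd1 ω = s') B
      = cPr p (fun ω => S ω = s') (fun ω => D ω = d - 1) := fun s' => by
    rw [sum_cPr_fiber p Sd _ B fun ω _ _ => hmemFd ω, (hNSd1 s').1, (hNSd1 s').2]
  have hrow : ∀ s, ∑ s' ∈ Fd1, cPr p (fun ω => Sd ω = s ∧ Sd1 ω = s') B
      = cPr p (fun ω => S ω = s) (fun ω => D ω = d) := fun s => by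
    simp only [and_comm (a := Sd _ = s)]
    rw [sum_cPr_fiber p Sd1 _ B fun ω _ _ => hmemFd1 ω, (hNSd s).1, (hNSd s).2]
  refine ⟨fun s' _ => hcol s', fun s _ => hrow s, ?_⟩
  rw [cexp_eq_sum_cPr_mul_cexp hp0 Y S (eq_iff_mem_filter_image hD hconsd),
    cexp_eq_sum_cPr_mul_cexp hp0 Y S (eq_iff_mem_filter_image hD hconsd1),
    sum_mul_sub_sum_mul_eq_of_marginals (fun s _ => hrow s) (fun s' _ => hcol s')]
  refine sum_congr rfl fun s hs => sum_congr rfl fun s' hs' => ?_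
  split_ifs with hcongr
  · rfl
  · rw [hNI s s' (mem_filter.1 hs).2 (mem_filter.1 hs').2 (not_exists.1 hcongr), zero_mul]

open Classical in
/-- Under no sorting and no incongruent latent types, the latent joint weights
`w(s_d, s_{d-1}) = P(S(d)=s_d, S(d-1)=s_{d-1} | D ∈ {d,d-1})` satisfy the coupling
constraints and place zero weight on incongruent pairs, so the aggregate marginal
effect is a fully congruent weighted combination:
`E[Y|D=d] − E[Y|D=d-1] = ∑_{congruent} w·(E[Y|S=s_d] − E[Y|S=s_{d-1}])`. -/
theorem no_incongruent_latent_types_decomposition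
    {Ω : Type*} [Fintype Ω] (K : ℕ)
    (p : Ω → ℝ) (hp0 : ∀ ω, 0 ≤ p ω) (hp1 : ∑ ω, p ω = 1)
    (Y : Ω → ℝ)
    (S Sd Sd1 : Ω → Fin K → ℕ) (D : Ω → ℕ) (hD : ∀ ω, D ω = ∑ i, S ω i)
    (d : ℕ) (hd : 1 ≤ d)
    (hPd : 0 < Pr p (fun ω => D ω = d)) (hPd1 : 0 < Pr p (fun ω => D ω = d - 1))
    -- latent sub-treatments aggregate to their level
    (hSd : ∀ ω, ∑ i, Sd ω i = d) (hSd1 : ∀ ω, ∑ i, Sd1 ω i = d - 1)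
    -- consistency: the observed sub-treatment equals the latent one, S = S(D)
    (hconsd : ∀ ω, D ω = d → S ω = Sd ω) (hconsd1 : ∀ ω, D ω = d - 1 → S ω = Sd1 ω)
    -- (a) no sorting of latent types on D
    (hNSd : ∀ s : Fin K → ℕ,
      cPr p (fun ω => Sd ω = s) (fun ω => D ω = d ∨ D ω = d - 1)
        = cPr p (fun ω => Sd ω = s) (fun ω => D ω = d) ∧
      cPr p (fun ω => Sd ω = s) (fun ω => D ω = d)
        = cPr p (fun ω => S ω = s) (fun ω => D ω = d))
    (hNSd1 : ∀ s' : Fin K → ℕ,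
      cPr p (fun ω => Sd1 ω = s') (fun ω => D ω = d ∨ D ω = d - 1)
        = cPr p (fun ω => Sd1 ω = s') (fun ω => D ω = d - 1) ∧
      cPr p (fun ω => Sd1 ω = s') (fun ω => D ω = d - 1)
        = cPr p (fun ω => S ω = s') (fun ω => D ω = d - 1))
    -- (b) no incongruent latent types
    (hNI : ∀ s s' : Fin K → ℕ, (∑ i, s i = d) → (∑ i, s' i = d - 1) →
      (∀ j : Fin K, s ≠ s' + Pi.single j 1) →
      cPr p (fun ω => Sd ω = s ∧ Sd1 ω = s') (fun ω => D ω = d ∨ D ω = d - 1) = 0) :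
    -- the latent joint distribution is a valid coupling …
    (∀ s' : Fin K → ℕ, (∑ i, s' i = d - 1) →
      ∑ s ∈ (univ.image Sd).filter (fun s => ∑ i, s i = d),
          cPr p (fun ω => Sd ω = s ∧ Sd1 ω = s') (fun ω => D ω = d ∨ D ω = d - 1)
        = cPr p (fun ω => S ω = s') (fun ω => D ω = d - 1)) ∧
    (∀ s : Fin K → ℕ, (∑ i, s i = d) →
      ∑ s' ∈ (univ.image Sd1).filter (fun s' => ∑ i, s' i = d - 1),
          cPr p (fun ω => Sd ω = s ∧ Sd1 ω = s') (fun ω => D ω = d ∨ D ω = d - 1)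
        = cPr p (fun ω => S ω = s) (fun ω => D ω = d)) ∧
    -- … that rationalizes the aggregate marginal effect with congruent pairs only
    (cexp p Y (fun ω => D ω = d) - cexp p Y (fun ω => D ω = d - 1)
      = ∑ s ∈ (univ.image Sd).filter (fun s => ∑ i, s i = d),
          ∑ s' ∈ (univ.image Sd1).filter (fun s' => ∑ i, s' i = d - 1),
            if ∃ j : Fin K, s = s' + Pi.single j 1 then
              cPr p (fun ω => Sd ω = s ∧ Sd1 ω = s') (fun ω => D ω = d ∨ D ω = d - 1) *
                (cexp p Y (fun ω => S ω = s) - cexp p Y (fun ω => S ω = s'))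
            else 0) :=
  no_incongruent_latent_types_decomposition_general K p hp0 Y S Sd Sd1 D hD d hSd hSd1 hconsd
    hconsd1 hNSd hNSd1 hNI
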